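/- arXiv:2206.06311 — 2 statements merged into one kernel-verified Lean document; each statement's English description precedes it below -/
import Mathlib

section
/- If n ≥ 4 is an even integer, then the inner automorphism group Inn(R_n) of the dihedral quandle R_n is isomorphic (as a group) to the dihedral group D_{n/2} of order n (Mathlib's DihedralGroup (n/2)). -/
/-- For `t : ZMod n`, the inner automorphism `R_t : x ↦ 2t - x` of the dihedral
quandle `R_n = Quandle.dihedral n`, as a permutation of `ZMod n`. -/
def dihedralR (n : ℕ) (t : ZMod n) : Equiv.Perm (ZMod n) where
  toFun x := 2 * t - x
  invFun x := 2 * t - x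
  left_inv x := by ring_nf
  right_inv x := by ring_nf

/-- The inner automorphism group of the dihedral quandle `R_n`: the subgroup of
`Equiv.Perm (ZMod n)` generated by the permutations `R_t`, `t : ZMod n`. -/
def dihedralInn (n : ℕ) : Subgroup (Equiv.Perm (ZMod n)) :=
  Subgroup.closure (Set.range (dihedralR n))

/-- The reflection `x ↦ c - x` as a permutation. -/
def reflPerm (n : ℕ) (c : ZMod n) : Equiv.Perm (ZMod n) where
  toFun x := c - x
  invFun x := c - x
  left_inv x := by ring_nf
  right_inv x := by ring_nf

/-- The doubling map `ZMod (n/2) →+ ZMod n`, `k ↦ 2k`. -/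
noncomputable def dmap (n : ℕ) (h : (2 : ℕ) ∣ n) : ZMod (n / 2) →+ ZMod n :=
  ZMod.lift (n / 2) ⟨zmultiplesHom (ZMod n) 2, by
    have h2 : (n / 2) * 2 = n := Nat.div_mul_cancel h
    show ((n / 2 : ℕ) : ℤ) • (2 : ZMod n) = 0
    have hcast : (((n / 2 : ℕ) : ℤ) : ZMod n) * 2 = (((n / 2) * 2 : ℕ) : ZMod n) := by
      rw [Int.cast_natCast, Nat.cast_mul, Nat.cast_ofNat]
    rw [zsmul_eq_mul, hcast, h2, ZMod.natCast_self]⟩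

lemma dmap_natCast (n : ℕ) (h : (2 : ℕ) ∣ n) (m : ℕ) :
    dmap n h ((m : ZMod (n / 2))) = 2 * (m : ZMod n) := by
  have : ((m : ZMod (n / 2))) = (((m : ℤ)) : ZMod (n / 2)) := by push_cast; rfl
  rw [this, dmap, ZMod.lift_coe]
  show (m : ℤ) • (2 : ZMod n) = 2 * (m : ZMod n)
  rw [zsmul_eq_mul]
  push_cast
  ring

lemma dmap_apply (n : ℕ) [NeZero (n / 2)] (h : (2 : ℕ) ∣ n) (k : ZMod (n / 2)) :
    dmap n h k = 2 * ((k.val : ZMod n)) := by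
  conv_lhs => rw [← ZMod.natCast_rightInverse k]
  rw [dmap_natCast]

/-- The homomorphism from the dihedral group to permutations. -/
noncomputable def dpsi (n : ℕ) (h : (2 : ℕ) ∣ n) :
    DihedralGroup (n / 2) →* Equiv.Perm (ZMod n) :=
  MonoidHom.mk' (fun g => match g with
    | .r k => Equiv.addRight (- dmap n h k)
    | .sr k => reflPerm n (dmap n h k))
    (by
      rintro (i | i) (j | j) <;>
        ext x <;>
        simp [DihedralGroup.r_mul_r, DihedralGroup.r_mul_sr, DihedralGroup.sr_mul_r,
          DihedralGroup.sr_mul_sr, reflPerm, Equiv.Perm.mul_apply, map_add, map_sub,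
          map_neg] <;>
        ring)

/-- If `n ≥ 4` is even, then `Inn(R_n)` is isomorphic as a group to the
dihedral group `D_{n/2}` of order `n`. -/
theorem dihedralInn_iso_of_even (n : ℕ) (hn : 4 ≤ n) (heven : Even n) :
    Nonempty (dihedralInn n ≃* DihedralGroup (n / 2)) := by
  have h2 : (2 : ℕ) ∣ n := heven.two_dvd
  have hm2 : 2 ≤ n / 2 := Nat.le_div_iff_mul_le (by norm_num) |>.mpr hn
  haveI : NeZero (n / 2) := ⟨by omega⟩
  haveI : NeZero n := ⟨by omega⟩
  have h2n : (2 : ZMod n) ≠ 0 := by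
    intro hc
    have : n ∣ 2 := by
      have : ((2 : ℕ) : ZMod n) = 0 := by exact_mod_cast hc
      exact (ZMod.natCast_eq_zero_iff 2 n).mp this
    exact absurd (Nat.le_of_dvd (by norm_num) this) (by omega)
  -- injectivity of dmap
  have hdinj : ∀ k : ZMod (n / 2), dmap n h2 k = 0 → k = 0 := by
    intro k hk
    rw [dmap_apply] at hk
    have : ((2 * k.val : ℕ) : ZMod n) = 0 := by push_cast; exact hk
    have hdvd : n ∣ 2 * k.val := (ZMod.natCast_eq_zero_iff _ n).mp this
    have hn2 : n = 2 * (n / 2) := (Nat.two_mul_div_two_of_even heven).symm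
    have : (n / 2) ∣ k.val := by
      rcases hdvd with ⟨c, hc⟩
      refine ⟨c, Nat.eq_of_mul_eq_mul_left (by norm_num : 0 < 2) ?_⟩
      rw [hc]
      conv_lhs => rw [hn2]
      rw [Nat.mul_assoc]
    have hlt : k.val < n / 2 := ZMod.val_lt k
    exact (ZMod.val_eq_zero k).mp (Nat.eq_zero_of_dvd_of_lt this hlt)
  -- injectivity of dpsi
  have hinj : Function.Injective (dpsi n h2) := by
    rw [injective_iff_map_eq_one]
    rintro (k | k) hk
    · have := congrArg (fun e => e.toFun 0) hk
      simp [dpsi, MonoidHom.mk'] at this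
      have hk0 : dmap n h2 k = 0 := by
        simpa using this
      rw [hdinj k hk0]
      rfl
    · exfalso
      have h0 := congrArg (fun e => e.toFun 0) hk
      have h1 := congrArg (fun e => e.toFun 1) hk
      simp [dpsi, MonoidHom.mk', reflPerm] at h0 h1
      rw [h0] at h1
      apply h2n
      have : (0 : ZMod n) - 1 = 1 := h1
      linear_combination -this
  -- dpsi (sr k) is a dihedralR
  have hsr : ∀ k : ZMod (n / 2), dpsi n h2 (.sr k) = dihedralR n ((k.val : ZMod n)) := by
    intro k
    ext x
    show reflPerm n (dmap n h2 k) x = _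
    simp [reflPerm, dihedralR, dmap_apply, Equiv.coe_fn_mk]
  -- range = dihedralInn
  have hrange : (dpsi n h2).range = dihedralInn n := by
    apply le_antisymm
    · rintro _ ⟨(k | k), rfl⟩
      · have hmul : (DihedralGroup.sr (-k) : DihedralGroup (n / 2)) * .sr 0 = .r k := by
          rw [DihedralGroup.sr_mul_sr]; ring_nf
        rw [← hmul, map_mul]
        exact mul_mem
          (Subgroup.subset_closure (by rw [hsr]; exact ⟨_, rfl⟩))
          (Subgroup.subset_closure (by rw [hsr]; exact ⟨_, rfl⟩))
      · exact Subgroup.subset_closure (by rw [hsr]; exact ⟨_, rfl⟩)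
    · rw [dihedralInn, Subgroup.closure_le]
      rintro _ ⟨t, rfl⟩
      refine ⟨.sr (ZMod.castHom (Nat.div_dvd_of_dvd h2) (ZMod (n / 2)) t), ?_⟩
      rw [hsr]
      have hval : (ZMod.castHom (Nat.div_dvd_of_dvd h2) (ZMod (n / 2)) t).val
          = t.val % (n / 2) := by
        rw [ZMod.castHom_apply, ← ZMod.natCast_val, ZMod.val_natCast]
      ext x
      show 2 * (((ZMod.castHom (Nat.div_dvd_of_dvd h2) (ZMod (n / 2)) t).val : ZMod n)) - x
          = 2 * t - x
      rw [hval]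
      congr 1
      have hn2half : 2 * (n / 2) = n := Nat.two_mul_div_two_of_even heven
      have key : 2 * (t.val % (n / 2)) + n * (t.val / (n / 2)) = 2 * t.val := by
        conv_rhs => rw [← Nat.mod_add_div t.val (n / 2)]
        rw [Nat.mul_add, ← Nat.mul_assoc, hn2half]
      calc 2 * ((t.val % (n / 2) : ℕ) : ZMod n)
          = ((2 * (t.val % (n / 2)) + n * (t.val / (n / 2)) : ℕ) : ZMod n) := by
            push_cast [ZMod.natCast_self]; ring
        _ = ((2 * t.val : ℕ) : ZMod n) := by rw [key]
        _ = 2 * t := by push_cast [ZMod.natCast_val, ZMod.cast_id]; ring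
  exact ⟨(MulEquiv.subgroupCongr hrange.symm).trans (MonoidHom.ofInjective hinj).symm⟩
end

section
/- If n ≥ 3 is an odd integer, then the inner automorphism group Inn(R_n) of the dihedral quandle R_n is isomorphic (as a group) to the dihedral group D_n of order 2n (Mathlib's DihedralGroup n). -/
/-- Auxiliary map from the dihedral group to permutations. -/
def dihedralToPerm (n : ℕ) : DihedralGroup n → Equiv.Perm (ZMod n)
  | .r i => Equiv.subRight (2 * i)
  | .sr i => dihedralR n i

theorem dihedralToPerm_mul (n : ℕ) (a b : DihedralGroup n) :
    dihedralToPerm n (a * b) = dihedralToPerm n a * dihedralToPerm n b := by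
  rcases a with i | i <;> rcases b with j | j <;>
    · ext x
      simp [dihedralToPerm, dihedralR, Equiv.subRight, Equiv.Perm.mul_apply]
      ring

/-- The group hom from `DihedralGroup n` to permutations of `ZMod n`. -/
def dihedralHom (n : ℕ) : DihedralGroup n →* Equiv.Perm (ZMod n) :=
  MonoidHom.mk' (dihedralToPerm n) (dihedralToPerm_mul n)

/-- If `n ≥ 3` is odd, then `Inn(R_n)` is isomorphic as a group to the
dihedral group `D_n` of order `2n`. -/
theorem dihedralInn_iso_of_odd (n : ℕ) (hn : 3 ≤ n) (hodd : Odd n) :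
    Nonempty (dihedralInn n ≃* DihedralGroup n) := by
  have h2 : IsUnit (2 : ZMod n) := by
    have : IsUnit ((2 : ℕ) : ZMod n) := by
      rw [ZMod.isUnit_iff_coprime]
      exact (Nat.coprime_two_left).mpr hodd
    simpa using this
  have h2ne : (2 : ZMod n) ≠ 0 := by
    intro h
    have : ((2 : ℕ) : ZMod n) = 0 := by simpa using h
    rw [ZMod.natCast_eq_zero_iff] at this
    have := Nat.le_of_dvd two_pos this
    omega
  have hinj : Function.Injective (dihedralHom n) := by
    rw [injective_iff_map_eq_one]
    rintro (i | i) h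
    · have := Equiv.ext_iff.mp h 0
      simp [dihedralHom, dihedralToPerm, Equiv.subRight] at this
      have hi : i = 0 := by
        have := h2.mul_left_cancel (by rw [this, mul_zero] : 2 * i = 2 * 0)
        simpa using this
      rw [hi, ← DihedralGroup.one_def]
    · exfalso
      have h1 := Equiv.ext_iff.mp h i
      have h2' := Equiv.ext_iff.mp h (i + 1)
      simp [dihedralHom, dihedralToPerm, dihedralR] at h1 h2'
      apply h2ne
      linear_combination h1 - h2'
  have hrange : (dihedralHom n).range = dihedralInn n := by
    apply le_antisymm
    · rintro g ⟨a, rfl⟩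
      rcases a with i | i
      · have : DihedralGroup.r i = DihedralGroup.sr 0 * DihedralGroup.sr i := by
          simp
        rw [this, map_mul]
        exact mul_mem (Subgroup.subset_closure ⟨0, rfl⟩)
          (Subgroup.subset_closure ⟨i, rfl⟩)
      · exact Subgroup.subset_closure ⟨i, rfl⟩
    · rw [dihedralInn]
      rw [Subgroup.closure_le]
      rintro g ⟨t, rfl⟩
      exact ⟨DihedralGroup.sr t, rfl⟩
  exact ⟨((MonoidHom.ofInjective hinj).trans (MulEquiv.subgroupCongr hrange)).symm⟩
end
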